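/- arXiv:2512.02603 — 5 statements merged into one kernel-verified Lean document; each statement's English description precedes it below -/
import Mathlib

section
/- The left skew product is associative: for all functions f, g, h : X → K, (f ∗ g) ∗ h = f ∗ (g ∗ h). In particular the set of functions X → K equipped with ∗ is a semigroup. -/
open scoped Classical in
/-- The action of a nonzero scalar `a : K` on `x : X` via the `Kˣ`-action
(defaulting to `x` when `a = 0`). -/
noncomputable def act {K X : Type*} [DivisionRing K] [MulAction Kˣ X] (a : K) (x : X) : X :=
  if h : a = 0 then x else (Units.mk0 a h) • x

open scoped Classical in
/-- The left skew product of functions `f g : X → K`. -/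
noncomputable def skewMul {K X : Type*} [DivisionRing K] [MulAction Kˣ X]
    (f g : X → K) : X → K :=
  fun x => if g x = 0 then 0 else f (act (g x) x) * g x

lemma act_mul {K X : Type*} [DivisionRing K] [MulAction Kˣ X] {a b : K}
    (ha : a ≠ 0) (hb : b ≠ 0) (x : X) : act (a * b) x = act a (act b x) := by
  simp only [act, dif_neg ha, dif_neg hb, dif_neg (mul_ne_zero ha hb)]
  rw [show Units.mk0 (a * b) (mul_ne_zero ha hb) = Units.mk0 a ha * Units.mk0 b hb by
    ext; simp, mul_smul]

/-- The left skew product is associative; in particular `(X → K, ∗)` is a semigroup. -/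
theorem skewMul_assoc {K X : Type*} [DivisionRing K] [MulAction Kˣ X]
    (f g h : X → K) :
    skewMul (skewMul f g) h = skewMul f (skewMul g h) := by
  funext x
  simp only [skewMul]
  by_cases hh : h x = 0
  · simp [hh]
  · simp only [hh, if_neg hh, if_false]
    by_cases hg : g (act (h x) x) = 0
    · simp [hg, mul_ne_zero]
    · simp only [if_neg hg, act_mul hg hh, mul_assoc]
      refine (if_neg ?_).symm
      simp [hh, hg]
end

section
/- The map φ(a, b) = σ(a)·b·a⁻¹ + δ(a)·a⁻¹ defines a left action of the multiplicative group Kˣ on K: φ(1, b) = b for every b ∈ K, and φ(a·c, b) = φ(a, φ(c, b)) for all nonzero a, c ∈ K and all b ∈ K. -/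
/-- `φ(a, b) = σ(a)·b·a⁻¹ + δ(a)·a⁻¹`. -/
def phi {K : Type*} [DivisionRing K] (σ : K →+* K) (δ : K →+ K) (a b : K) : K :=
  σ a * b * a⁻¹ + δ a * a⁻¹

/-- `φ` defines a left action of the multiplicative group `Kˣ` on `K`. -/
theorem phi_is_action {K : Type*} [DivisionRing K] (σ : K →+* K) (δ : K →+ K)
    (hδ : ∀ x y : K, δ (x * y) = σ x * δ y + δ x * y) :
    (∀ b : K, phi σ δ 1 b = b) ∧
      (∀ a c b : K, a ≠ 0 → c ≠ 0 →
        phi σ δ (a * c) b = phi σ δ a (phi σ δ c b)) := by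
  have h1 : δ 1 = 0 := by
    have := hδ 1 1
    simpa using this
  constructor
  · intro b
    simp [phi, h1]
  · intro a c b ha hc
    have hcc : c * c⁻¹ = (1 : K) := mul_inv_cancel₀ hc
    simp only [phi, map_mul, hδ, mul_inv_rev, add_mul, mul_add, mul_assoc]
    rw [mul_inv_cancel_left₀ hc]
    abel
end

section
/- If a W-family (g, s) satisfies the (u,u)-constraints (that is, the (u,v)-constraints with v = u), then its evaluation is constant: E(i) = E(l) for all indices i, l. (Equivalently: if P ∈ W^{(u,u)} then P(a_i) = P(a_j) for all i, j.) -/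
open Finset

/-- Off-diagonal symmetry of the generic-value matrix. -/
def WSymm {R : Type*} [CommRing R] {r : ℕ} (g : Fin r → Fin r → R) : Prop :=
  ∀ j k : Fin r, j ≠ k → g j k = g k j

/-- `∏_{k ≠ i} s i k`, the product of the special values of the family at index `i`. -/
def specProd {R : Type*} [CommRing R] {r : ℕ} (s : Fin r → Fin r → R) (i : Fin r) : R :=
  ∏ k ∈ univ.filter (fun k => k ≠ i), s i k

/-- `∏_{{j,k} : j < k, j ≠ i, k ≠ i} g j k`, the product of the generic values over
all pairs avoiding `i`. -/
def genProd {R : Type*} [CommRing R] {r : ℕ} (g : Fin r → Fin r → R) (i : Fin r) : R :=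
  ∏ p ∈ univ.filter (fun p : Fin r × Fin r => p.1 < p.2 ∧ p.1 ≠ i ∧ p.2 ≠ i), g p.1 p.2

/-- The evaluation `E(i) = (∏_{k ≠ i} s i k) · (∏_{{j,k} : j < k, j ≠ i, k ≠ i} g j k)`
of the W-family `(g, s)` at index `i`; this is the value `P(a_i)`. -/
def wEval {R : Type*} [CommRing R] {r : ℕ} (g s : Fin r → Fin r → R) (i : Fin r) : R :=
  specProd s i * genProd g i

/-- `∏_{k ∉ {i,l}} g row k`. -/
def rowProdAvoid {R : Type*} [CommRing R] {r : ℕ} (g : Fin r → Fin r → R)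
    (row i l : Fin r) : R :=
  ∏ k ∈ univ.filter (fun k => k ≠ i ∧ k ≠ l), g row k

/-- The `(u,v)`-constraints on a W-family `(g, s)`. -/
def WConstraints {R : Type*} [CommRing R] {r : ℕ}
    (g s u v : Fin r → Fin r → R) : Prop :=
  ∀ i l : Fin r, i ≠ l →
    specProd s i * rowProdAvoid g l i l = u i l ∧
    specProd s l * rowProdAvoid g i i l = v i l

/-- `C(i,l) = ∏_{{j,k} : j < k, j,k ∉ {i,l}} g j k`, the product of the generic values
over all pairs avoiding both `i` and `l`. -/
def pairProdAvoid {R : Type*} [CommRing R] {r : ℕ} (g : Fin r → Fin r → R)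
    (i l : Fin r) : R :=
  ∏ p ∈ univ.filter (fun p : Fin r × Fin r =>
    p.1 < p.2 ∧ p.1 ≠ i ∧ p.1 ≠ l ∧ p.2 ≠ i ∧ p.2 ≠ l), g p.1 p.2

/-- If a W-family satisfies the `(u,u)`-constraints then its evaluation is constant:
if `P ∈ W^{(u,u)}` then `P(a_i) = P(a_l)` for all `i, l`. -/
theorem wEval_const_of_uu {R : Type*} [CommRing R] {r : ℕ} (hr : 2 ≤ r)
    (g s u : Fin r → Fin r → R) (hg : WSymm g)
    (hc : WConstraints g s u u) :
    ∀ i l : Fin r, wEval g s i = wEval g s l := by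
  have key : ∀ i l : Fin r, i ≠ l →
      genProd g i = rowProdAvoid g l i l * pairProdAvoid g i l := by
    intro i l hil
    rw [genProd, ← Finset.prod_filter_mul_prod_filter_not
      (univ.filter (fun p : Fin r × Fin r => p.1 < p.2 ∧ p.1 ≠ i ∧ p.2 ≠ i))
      (fun p => p.1 = l ∨ p.2 = l)]
    congr 1
    · rw [rowProdAvoid]
      apply Finset.prod_bij' (i := fun (p : Fin r × Fin r) _ => if p.1 = l then p.2 else p.1)
        (j := fun k _ => if l < k then (l, k) else (k, l))
      · intro p hp
        simp only [Finset.mem_filter, Finset.mem_univ, true_and] at hp ⊢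
        obtain ⟨⟨hlt, h1, h2⟩, hor⟩ := hp
        rcases hor with h | h
        · rw [if_pos h]
          refine ⟨h2, ?_⟩
          intro hh; rw [h, hh] at hlt; exact lt_irrefl _ hlt
        · have hne : p.1 ≠ l := by rintro rfl; exact lt_irrefl _ (h ▸ hlt)
          simp only [hne, if_neg]
          exact ⟨h1, hne⟩
      · intro k hk
        simp only [Finset.mem_filter, Finset.mem_univ, true_and] at hk ⊢
        obtain ⟨hki, hkl⟩ := hk
        rcases lt_or_gt_of_ne (Ne.symm hkl) with h | h
        · rw [if_pos h]
          exact ⟨⟨h, Ne.symm hil, hki⟩, Or.inl rfl⟩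
        · rw [if_neg (not_lt.mpr h.le)]
          exact ⟨⟨h, hki, Ne.symm hil⟩, Or.inr rfl⟩
      · intro p hp
        simp only [Finset.mem_filter, Finset.mem_univ, true_and] at hp
        obtain ⟨⟨hlt, h1, h2⟩, hor⟩ := hp
        rcases hor with h | h
        · rw [if_pos h, if_pos (h ▸ hlt)]
          exact Prod.ext h.symm rfl
        · have hne : p.1 ≠ l := by rintro rfl; exact lt_irrefl _ (h ▸ hlt)
          rw [if_neg hne, if_neg (not_lt.mpr (h ▸ hlt).le)]
          exact Prod.ext rfl h.symm
      · intro k hk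
        rcases lt_or_ge l k with h | h
        · simp [h]
        · simp only [if_neg (not_lt.mpr h)]
          simp only [Finset.mem_filter, Finset.mem_univ, true_and] at hk
          simp [hk.2]
      · intro p hp
        simp only [Finset.mem_filter, Finset.mem_univ, true_and] at hp
        obtain ⟨⟨hlt, h1, h2⟩, hor⟩ := hp
        rcases hor with h | h
        · simp [h]
        · have hne : p.1 ≠ l := by rintro rfl; exact lt_irrefl _ (h ▸ hlt)
          rw [if_neg hne, h]
          exact hg p.1 l (h ▸ (hlt.ne))
    · rw [pairProdAvoid]
      apply Finset.prod_congr _ (fun _ _ => rfl)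
      ext p
      simp only [Finset.mem_filter, Finset.mem_univ, true_and, not_or]
      tauto
  intro i l
  rcases eq_or_ne i l with rfl | hil
  · rfl
  have hC : pairProdAvoid g i l = pairProdAvoid g l i := by
    rw [pairProdAvoid, pairProdAvoid]
    apply Finset.prod_congr _ (fun _ _ => rfl)
    ext p
    simp only [Finset.mem_filter]
    tauto
  have h1 := (hc i l hil).1
  have h2 := (hc i l hil).2
  have hR : rowProdAvoid g i l i = rowProdAvoid g i i l := by
    rw [rowProdAvoid, rowProdAvoid]
    apply Finset.prod_congr _ (fun _ _ => rfl)
    ext k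
    simp only [Finset.mem_filter]
    tauto
  rw [wEval, wEval, key i l hil, key l i (Ne.symm hil), hC, hR, ← mul_assoc, ← mul_assoc,
    h1, h2]
end

section
/- If two W-families (g, s) and (g', s') both satisfy the same (u,v)-constraints, with evaluations E and E' respectively, then E(i)·E'(l) − E(l)·E'(i) = 0 for all indices i, l. (Equivalently: if P, Q ∈ W^{(u,v)} then P(a_i)Q(a_l) = P(a_l)Q(a_i).) -/
open Finset

lemma rowProdAvoid_comm {R : Type*} [CommRing R] {r : ℕ} (g : Fin r → Fin r → R)
    (row i l : Fin r) : rowProdAvoid g row i l = rowProdAvoid g row l i := by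
  unfold rowProdAvoid
  apply Finset.prod_congr _ (fun _ _ => rfl)
  ext k; simp [and_comm]

lemma pairProdAvoid_comm {R : Type*} [CommRing R] {r : ℕ} (g : Fin r → Fin r → R)
    (i l : Fin r) : pairProdAvoid g i l = pairProdAvoid g l i := by
  unfold pairProdAvoid
  apply Finset.prod_congr _ (fun _ _ => rfl)
  ext p; simp only [mem_filter]; tauto

lemma genProd_split {R : Type*} [CommRing R] {r : ℕ} (g : Fin r → Fin r → R)
    (hg : WSymm g) (i l : Fin r) (hil : i ≠ l) :
    genProd g i = rowProdAvoid g l i l * pairProdAvoid g i l := by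
  unfold genProd rowProdAvoid pairProdAvoid
  rw [← Finset.prod_filter_mul_prod_filter_not
    (univ.filter (fun p : Fin r × Fin r => p.1 < p.2 ∧ p.1 ≠ i ∧ p.2 ≠ i))
    (fun p => p.1 = l ∨ p.2 = l)]
  congr 1
  · refine (Finset.prod_nbij' (fun k => if k < l then (k, l) else (l, k))
      (fun p => if p.1 = l then p.2 else p.1) ?_ ?_ ?_ ?_ ?_).symm
    · intro k hk
      simp only [mem_filter, mem_univ, true_and] at hk ⊢
      rcases lt_or_gt_of_ne hk.2 with h | h
      · simp [h, h.ne, hk.1, hil.symm, hk.2]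
      · simp [not_lt.mpr h.le, h, hk.1, hil.symm, hk.2, h.ne']
    · intro p hp
      simp only [mem_filter, mem_univ, true_and] at hp ⊢
      obtain ⟨⟨hlt, h1, h2⟩, hl⟩ := hp
      rcases hl with h | h
      · subst h; simp [h2, hlt.ne']
      · subst h; simp [h1, hlt.ne]
    · intro k hk
      simp only [mem_filter, mem_univ, true_and] at hk
      rcases lt_or_gt_of_ne hk.2 with h | h
      · simp [h, h.ne]
      · simp [not_lt.mpr h.le]
    · intro p hp
      simp only [mem_filter, mem_univ, true_and] at hp
      obtain ⟨⟨hlt, h1, h2⟩, hl⟩ := hp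
      rcases hl with h | h
      · subst h; simp [not_lt.mpr hlt.le]
      · subst h; simp [hlt.ne, hlt]
    · intro k hk
      simp only [mem_filter, mem_univ, true_and] at hk
      rcases lt_or_gt_of_ne hk.2 with h | h
      · simp only [if_pos h]; exact hg l k hk.2.symm
      · simp [not_lt.mpr h.le]
  · apply Finset.prod_congr _ (fun _ _ => rfl)
    rw [Finset.filter_filter]
    apply Finset.filter_congr
    intro p _
    push_neg
    tauto

/-- If `P, Q ∈ W^{(u,v)}` then `P(a_i)Q(a_l) − P(a_l)Q(a_i) = 0` for all `i, l`. -/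
theorem wEval_cross_symm {R : Type*} [CommRing R] {r : ℕ} (hr : 2 ≤ r)
    (g s g' s' u v : Fin r → Fin r → R)
    (hg : WSymm g) (hg' : WSymm g')
    (hc : WConstraints g s u v) (hc' : WConstraints g' s' u v) :
    ∀ i l : Fin r,
      wEval g s i * wEval g' s' l - wEval g s l * wEval g' s' i = 0 := by
  intro i l
  by_cases h : i = l
  · subst h; ring
  · obtain ⟨hu, hv⟩ := hc i l h
    obtain ⟨hu', hv'⟩ := hc' i l h
    have e1 : wEval g s i * wEval g' s' l
        = u i l * v i l * (pairProdAvoid g i l * pairProdAvoid g' i l) := by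
      unfold wEval
      rw [genProd_split g hg i l h, genProd_split g' hg' l i (Ne.symm h),
        rowProdAvoid_comm g' i l i, pairProdAvoid_comm g' l i, ← hu, ← hv']
      ring
    have e2 : wEval g s l * wEval g' s' i
        = u i l * v i l * (pairProdAvoid g i l * pairProdAvoid g' i l) := by
      unfold wEval
      rw [genProd_split g hg l i (Ne.symm h), genProd_split g' hg' i l h,
        rowProdAvoid_comm g i l i, pairProdAvoid_comm g l i, ← hv, ← hu']
      ring
    rw [e1, e2, sub_self]
end

section
/- Products of W-family evaluations satisfy the cross-symmetry relation: let (g, s) and (g', s') be W-families satisfying the (u,v)-constraints, with evaluations E and E', and let (h, t) and (h', t') be W-families satisfying the (u¹,v¹)-constraints, with evaluations F and F'. Then (E(i)·F(i))·(E'(l)·F'(l)) − (E(l)·F(l))·(E'(i)·F'(i)) = 0 for all indices i, l. (Equivalently: if P, Q ∈ W^{(u,v)} and R, S ∈ W^{(u¹,v¹)} then (P·R)(a_i)(Q·S)(a_l) = (P·R)(a_l)(Q·S)(a_i).) -/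
open Finset

lemma wEval_eq_u {R : Type*} [CommRing R] {r : ℕ} (g s u v : Fin r → Fin r → R)
    (hg : WSymm g) (hc : WConstraints g s u v) (i l : Fin r) (hil : i ≠ l) :
    wEval g s i = u i l * pairProdAvoid g i l := by
  rw [wEval, genProd_split g hg i l hil, ← mul_assoc, (hc i l hil).1]

lemma wEval_eq_v {R : Type*} [CommRing R] {r : ℕ} (g s u v : Fin r → Fin r → R)
    (hg : WSymm g) (hc : WConstraints g s u v) (i l : Fin r) (hil : i ≠ l) :
    wEval g s l = v i l * pairProdAvoid g i l := by
  rw [wEval, genProd_split g hg l i (Ne.symm hil), ← mul_assoc,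
    rowProdAvoid_comm, pairProdAvoid_comm, (hc i l hil).2]

/-- If `P, Q ∈ W^{(u,v)}` and `R, S ∈ W^{(u¹,v¹)}` then
`(P·R)(a_i)(Q·S)(a_l) − (P·R)(a_l)(Q·S)(a_i) = 0` for all `i, l`. -/
theorem wEval_mul_cross_symm {R : Type*} [CommRing R] {r : ℕ} (hr : 2 ≤ r)
    (g s g' s' u v : Fin r → Fin r → R)
    (h t h' t' u₁ v₁ : Fin r → Fin r → R)
    (hg : WSymm g) (hg' : WSymm g') (hh : WSymm h) (hh' : WSymm h')
    (hc : WConstraints g s u v) (hc' : WConstraints g' s' u v)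
    (hd : WConstraints h t u₁ v₁) (hd' : WConstraints h' t' u₁ v₁) :
    ∀ i l : Fin r,
      (wEval g s i * wEval h t i) * (wEval g' s' l * wEval h' t' l) -
        (wEval g s l * wEval h t l) * (wEval g' s' i * wEval h' t' i) = 0 := by
  intro i l
  by_cases hil : i = l
  · subst hil; ring
  · rw [wEval_eq_u g s u v hg hc i l hil, wEval_eq_v g s u v hg hc i l hil,
      wEval_eq_u g' s' u v hg' hc' i l hil, wEval_eq_v g' s' u v hg' hc' i l hil,
      wEval_eq_u h t u₁ v₁ hh hd i l hil, wEval_eq_v h t u₁ v₁ hh hd i l hil,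
      wEval_eq_u h' t' u₁ v₁ hh' hd' i l hil, wEval_eq_v h' t' u₁ v₁ hh' hd' i l hil]
    ring
end
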